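/- For the deformed Hamiltonian T̃_b = T_b/(1 − λ x), the function K̃_{b2} = p_x^2 + (2k_1 x^2 + k_3 x) p_z^2 + 2λ x T̃_b Poisson-commutes with T̃_b on the open set where 1 − λ x ≠ 0 and y ≠ 0. -/

import Mathlib

/-- Canonical Poisson bracket on phase space ℝ³ × ℝ³ with coordinates (x,y,z,pₓ,p_y,p_z). -/
noncomputable def pb (F G : ℝ → ℝ → ℝ → ℝ → ℝ → ℝ → ℝ) (x y z px py pz : ℝ) : ℝ :=
    deriv (fun t => F t y z px py pz) x * deriv (fun t => G x y z t py pz) px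
  + deriv (fun t => F x t z px py pz) y * deriv (fun t => G x y z px t pz) py
  + deriv (fun t => F x y t px py pz) z * deriv (fun t => G x y z px py t) pz
  - deriv (fun t => F x y z t py pz) px * deriv (fun t => G t y z px py pz) x
  - deriv (fun t => F x y z px t pz) py * deriv (fun t => G x t z px py pz) y
  - deriv (fun t => F x y z px py t) pz * deriv (fun t => G x y t px py pz) z

noncomputable def Ttb (lam k1 k2 k3 : ℝ) : ℝ → ℝ → ℝ → ℝ → ℝ → ℝ → ℝ :=
  fun x y _ px py pz =>
    ((1/2) * (px^2 + py^2 + ((1/2)*k1*(4*x^2+y^2) + k2/y^2 + k3*x) * pz^2))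
      / (1 - lam*x)


/-!
Write `A = pₓ² + (2k₁x² + k₃x) p_z²` and `B = p_y² + (k₁y²/2 + k₂/y²) p_z²`, so that `2 T_b = A + B`
separates in `(x, pₓ)` and `(y, p_y)` and nothing depends on `z`. With `μ = 1 - λx` one has
`T̃ = (A + B)/(2μ)` and `K̃ = A + 2λx T̃ = (A + λx B)/μ`. Hence the `(x, pₓ)`-gradient of `K̃` is
twice that of `T̃` and its `(y, p_y)`-gradient is `2λx` times that of `T̃`, so each block of the
bracket vanishes separately.
-/

noncomputable def deformedSeparable (A B : ℝ → ℝ → ℝ → ℝ) (lam : ℝ) :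
    ℝ → ℝ → ℝ → ℝ → ℝ → ℝ → ℝ :=
  fun x y _ px py pz => (A x px pz + B y py pz) / 2 / (1 - lam * x)

theorem pb_deformedSeparable_eq_zero {A B : ℝ → ℝ → ℝ → ℝ} {lam x y z px py pz : ℝ}
    (hμ : 1 - lam * x ≠ 0)
    (hAx : DifferentiableAt ℝ (fun t => A t px pz) x)
    (hApx : DifferentiableAt ℝ (fun t => A x t pz) px)
    (hBy : DifferentiableAt ℝ (fun t => B t py pz) y)
    (hBpy : DifferentiableAt ℝ (fun t => B y t pz) py) :
    pb (deformedSeparable A B lam)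
      (fun x y z px py pz => A x px pz + 2 * lam * x * deformedSeparable A B lam x y z px py pz)
      x y z px py pz = 0 := by
  set H := deformedSeparable A B lam
  have hden : HasDerivAt (fun t : ℝ => 1 - lam * t) (-lam) x := by
    simpa using ((hasDerivAt_id x).const_mul lam).const_sub 1
  have hHx : HasDerivAt (fun t => H t y z px py pz) _ x :=
    ((hAx.hasDerivAt.add_const (B y py pz)).div_const 2).div hden hμ
  have hKx : HasDerivAt (fun t => A t px pz + 2 * lam * t * H t y z px py pz) _ x :=
    hAx.hasDerivAt.add (((hasDerivAt_id' x).const_mul (2 * lam)).mul hHx)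
  have hHy : HasDerivAt (fun t => H x t z px py pz) _ y :=
    (hBy.hasDerivAt.const_add (A x px pz)).div_const 2 |>.div_const (1 - lam * x)
  have hKy : HasDerivAt (fun t => A x px pz + 2 * lam * x * H x t z px py pz) _ y :=
    (hHy.const_mul (2 * lam * x)).const_add (A x px pz)
  have hHpx : HasDerivAt (fun t => H x y z t py pz) _ px :=
    (hApx.hasDerivAt.add_const (B y py pz)).div_const 2 |>.div_const (1 - lam * x)
  have hKpx : HasDerivAt (fun t => A x t pz + 2 * lam * x * H x y z t py pz) _ px :=
    hApx.hasDerivAt.add (hHpx.const_mul (2 * lam * x))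
  have hHpy : HasDerivAt (fun t => H x y z px t pz) _ py :=
    (hBpy.hasDerivAt.const_add (A x px pz)).div_const 2 |>.div_const (1 - lam * x)
  have hKpy : HasDerivAt (fun t => A x px pz + 2 * lam * x * H x y z px t pz) _ py :=
    (hHpy.const_mul (2 * lam * x)).const_add (A x px pz)
  have hHz : deriv (fun t => H x y t px py pz) z = 0 := deriv_const z _
  have hKz : deriv (fun t => A x px pz + 2 * lam * x * H x y t px py pz) z = 0 :=
    deriv_const z (A x px pz + 2 * lam * x * H x y 0 px py pz)
  simp only [pb, hHx.deriv, hKx.deriv, hHy.deriv, hKy.deriv, hHpx.deriv, hKpx.deriv,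
    hHpy.deriv, hKpy.deriv, hHz, hKz]
  simp only [H, deformedSeparable]
  field_simp
  ring

theorem stmt_11 (lam k1 k2 k3 : ℝ) (x y z px py pz : ℝ)
    (hmu : 1 - lam*x ≠ 0) (hy : y ≠ 0) :
    pb (Ttb lam k1 k2 k3)
       (fun x y z' px py pz =>
          px^2 + (2*k1*x^2 + k3*x) * pz^2
            + 2*lam*x * Ttb lam k1 k2 k3 x y z' px py pz)
       x y z px py pz = 0 := by
  have hT : Ttb lam k1 k2 k3 = deformedSeparable (fun x px pz => px^2 + (2*k1*x^2 + k3*x) * pz^2)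
      (fun y py pz => py^2 + (k1 * y^2 / 2 + k2 / y^2) * pz^2) lam := by
    funext x y z px py pz
    simp only [Ttb, deformedSeparable]
    ring
  rw [hT]
  exact pb_deformedSeparable_eq_zero hmu (by fun_prop) (by fun_prop)
    (by fun_prop (disch := exact pow_ne_zero 2 hy)) (by fun_prop)
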